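/- Let α ∈ (0,1], q ≥ 1, x ∈ C^α([a,b], ℝ^ℓ), and let ε > 0 be such that (1−ε)/q + α > 1. Then for any two paths y, y' : [a,b] → L(ℝ^ℓ, ℝ^d) of finite q-variation and any [s,t] ⊂ [a,b], the Young integrals satisfy ‖∫_0^· y_u dx_u − ∫_0^· y'_u dx_u‖_{α,[s,t]} ≤ C ‖y − y'‖_{∞,[s,t]}^ε ( ‖y‖_{q-var,∞,[s,t]}^{1−ε} + ‖y'‖_{q-var,∞,[s,t]}^{1−ε} ) ‖x‖_{α,[s,t]}, for a constant C depending only on α, q and ε. -/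

import Mathlib

/-!
Put `z = y - y'` and `r = q / (1 - ε)`. Interpolating between the uniform norm and the
`q`-variation gives `‖z‖_{r-var} ≤ (2 ‖z‖_∞)^ε (‖y‖_{q-var} + ‖y'‖_{q-var})^{1-ε}`, and an
`α`-Hölder path has finite `1/α`-variation. Since `θ = 1/r + α > 1`, the Young–Loève estimate
applies to `∫ z dx`: in a partition with `m + 2` intervals, Hölder's inequality shows that some
interior point can be removed while changing the Riemann sum by at most
`(m + 1)^{-θ} ‖z‖_{r-var} ‖x‖_{1/α-var}`; removing points one at a time down to the trivial
partition costs at most `ζ(θ) ‖z‖_{r-var} ‖x‖_{1/α-var}`.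
-/

open Set

noncomputable section

abbrev Euc (n : ℕ) := EuclideanSpace ℝ (Fin n)

/-- A finite partition of the interval `[a, b]`, given by points
`a = t 0 ≤ t 1 ≤ ⋯ ≤ t n = b`. -/
structure PathPartition (a b : ℝ) where
  n : ℕ
  t : ℕ → ℝ
  npos : 0 < n
  first : t 0 = a
  last : t n = b
  mono : ∀ i, i < n → t i ≤ t (i + 1)

/-- The partition has mesh `< δ`. -/
def PathPartition.fine {a b : ℝ} (P : PathPartition a b) (δ : ℝ) : Prop :=
  ∀ i < P.n, P.t (i + 1) - P.t i < δ

variable {E F : Type*} [NormedAddCommGroup E] [NormedSpace ℝ E]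
  [NormedAddCommGroup F] [NormedSpace ℝ F]

/-- `∑_i ‖y_{t_{i+1}} - y_{t_i}‖^q` along a partition. -/
def pvarSum (q : ℝ) {a b : ℝ} (y : ℝ → E) (P : PathPartition a b) : ℝ :=
  ∑ i ∈ Finset.range P.n, ‖y (P.t (i + 1)) - y (P.t i)‖ ^ q

/-- The set of all `q`-variation sums of `y` over partitions of `[a,b]`. -/
def pvarSums (q a b : ℝ) (y : ℝ → E) : Set ℝ :=
  {r | ∃ P : PathPartition a b, r = pvarSum q y P}

/-- `y` has finite `q`-variation on `[a,b]`. -/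
def FinitePVar (q a b : ℝ) (y : ℝ → E) : Prop :=
  BddAbove (pvarSums q a b y)

/-- The `q`-variation seminorm of `y` on `[a,b]`. -/
def pVar (q a b : ℝ) (y : ℝ → E) : ℝ :=
  sSup (pvarSums q a b y) ^ (1 / q)

/-- The uniform norm of `y` on `[a,b]`. -/
def unifNorm (a b : ℝ) (y : ℝ → E) : ℝ :=
  sSup ((fun t => ‖y t‖) '' Icc a b)

/-- `C` is an `α`-Hölder constant for `x` on `[a,b]`. -/
def IsHolderWith (C α a b : ℝ) (x : ℝ → E) : Prop :=
  ∀ s ∈ Icc a b, ∀ t ∈ Icc a b, ‖x t - x s‖ ≤ C * |t - s| ^ α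

/-- Riemann sum of `y` against `x` along a partition. -/
def youngSum {a b : ℝ} (y : ℝ → E →L[ℝ] F) (x : ℝ → E) (P : PathPartition a b) : F :=
  ∑ i ∈ Finset.range P.n, y (P.t i) (x (P.t (i + 1)) - x (P.t i))

/-- `I` is the Young integral `∫_a^b y dx`: the Riemann sums converge to `I`
as the mesh tends to `0`. -/
def IsYoungIntegral (y : ℝ → E →L[ℝ] F) (x : ℝ → E) (a b : ℝ) (I : F) : Prop :=
  ∀ ε > 0, ∃ δ > 0, ∀ P : PathPartition a b, P.fine δ → ‖youngSum y x P - I‖ < ε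

end

namespace PathPartition

variable {a b : ℝ} (P : PathPartition a b)

theorem t_mono {i j : ℕ} (hij : i ≤ j) (hj : j ≤ P.n) : P.t i ≤ P.t j := by
  induction j, hij using Nat.le_induction with
  | base => exact le_rfl
  | succ k _ ih => exact (ih (by omega)).trans (P.mono k (by omega))

theorem t_mem {i : ℕ} (hi : i ≤ P.n) : P.t i ∈ Icc a b := by
  constructor
  · simpa only [P.first] using P.t_mono (Nat.zero_le i) hi
  · simpa only [P.last] using P.t_mono hi le_rfl

theorem left_le_right (P : PathPartition a b) : a ≤ b := by
  simpa only [P.first, P.last] using P.t_mono (Nat.zero_le P.n) le_rfl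

def single (h : a ≤ b) : PathPartition a b where
  n := 1
  t j := if j = 0 then a else b
  npos := one_pos
  first := rfl
  last := rfl
  mono i hi := by interval_cases i; simpa using h

def extendLeft {a' : ℝ} (h : a' ≤ a) : PathPartition a' b where
  n := P.n + 1
  t j := if j = 0 then a' else P.t (j - 1)
  npos := Nat.succ_pos _
  first := rfl
  last := by simp [P.last]
  mono
    | 0, _ => by simpa [P.first] using h
    | k + 1, hk => by simpa using P.mono k (by omega)

def extendRight {b' : ℝ} (h : b ≤ b') : PathPartition a b' where
  n := P.n + 1
  t j := if j ≤ P.n then P.t j else b'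
  npos := Nat.succ_pos _
  first := by simp [P.first]
  last := by simp
  mono i hi := by
    rcases Nat.lt_or_ge i P.n with hi' | hi'
    · simpa [hi'.le, Nat.succ_le_of_lt hi'] using P.mono i hi'
    · obtain rfl : i = P.n := by omega
      simpa [P.last] using h

def remove (i : ℕ) (h : i + 2 ≤ P.n) : PathPartition a b where
  n := P.n - 1
  t j := if j ≤ i then P.t j else P.t (j + 1)
  npos := by omega
  first := by simp [P.first]
  last := by
    rw [if_neg (by omega), Nat.sub_add_cancel (by omega), P.last]
  mono j hj := by
    rcases lt_trichotomy j i with hji | rfl | hji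
    · simpa [hji.le, Nat.succ_le_of_lt hji] using P.mono j (by omega)
    · simpa using (P.mono j (by omega)).trans (P.mono (j + 1) (by omega))
    · simp only [if_neg hji.not_ge, if_neg (by omega : ¬ j + 1 ≤ i)]
      exact P.mono (j + 1) (by omega)

theorem exists_fine {u v : ℝ} (huv : u ≤ v) {δ : ℝ} (hδ : 0 < δ) :
    ∃ P : PathPartition u v, P.fine δ := by
  obtain ⟨n, hn⟩ := exists_nat_gt ((v - u) / δ)
  have hn0 : (0 : ℝ) < n := (div_nonneg (sub_nonneg.2 huv) hδ.le).trans_lt hn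
  have hstep : (v - u) / n < δ := by
    rw [div_lt_iff₀ hn0]
    rwa [div_lt_iff₀ hδ, mul_comm] at hn
  have hstep0 : 0 ≤ (v - u) / n := div_nonneg (sub_nonneg.2 huv) hn0.le
  refine ⟨⟨n, fun i => u + i * ((v - u) / n), by exact_mod_cast hn0, by simp, ?_, ?_⟩, ?_⟩
  · field_simp
    ring
  · intro i _
    push_cast
    nlinarith
  · intro i _
    push_cast
    linarith

end PathPartition

theorem le_rpow_mul_rpow_of_le {Z W ε : ℝ} (hZ : 0 ≤ Z) (hZW : Z ≤ W) (hε1 : ε ≤ 1) :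
    Z ≤ Z ^ ε * W ^ (1 - ε) := calc
  Z = Z ^ ε * Z ^ (1 - ε) := by
    rw [← Real.rpow_add' hZ (by rw [add_sub_cancel]; exact one_ne_zero), add_sub_cancel,
      Real.rpow_one]
  _ ≤ Z ^ ε * W ^ (1 - ε) := by gcongr

section Variation

variable {E : Type*} [NormedAddCommGroup E]

theorem pvarSum_nonneg (q : ℝ) {a b : ℝ} (y : ℝ → E) (P : PathPartition a b) :
    0 ≤ pvarSum q y P :=
  Finset.sum_nonneg fun _ _ => Real.rpow_nonneg (norm_nonneg _) q

theorem pvarSum_le_extendLeft (q : ℝ) {a b a' : ℝ} (y : ℝ → E) (P : PathPartition a b)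
    (h : a' ≤ a) : pvarSum q y P ≤ pvarSum q y (P.extendLeft h) := by
  unfold pvarSum PathPartition.extendLeft
  rw [Finset.sum_range_succ']
  simpa using Real.rpow_nonneg (norm_nonneg _) q

theorem pvarSum_le_extendRight (q : ℝ) {a b b' : ℝ} (y : ℝ → E) (P : PathPartition a b)
    (h : b ≤ b') : pvarSum q y P ≤ pvarSum q y (P.extendRight h) := by
  unfold pvarSum PathPartition.extendRight
  rw [Finset.sum_range_succ]
  refine le_add_of_le_of_nonneg (le_of_eq (Finset.sum_congr rfl fun i hi => ?_))
    (Real.rpow_nonneg (norm_nonneg _) q)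
  rw [Finset.mem_range] at hi
  simp [hi.le, Nat.succ_le_of_lt hi]

theorem pvarSum_le_sSup {q a b u v : ℝ} {y : ℝ → E} (hy : FinitePVar q a b y) (hau : a ≤ u)
    (hvb : v ≤ b) (Q : PathPartition u v) : pvarSum q y Q ≤ sSup (pvarSums q a b y) :=
  calc pvarSum q y Q ≤ pvarSum q y (Q.extendLeft hau) := pvarSum_le_extendLeft q y Q hau
    _ ≤ pvarSum q y ((Q.extendLeft hau).extendRight hvb) := pvarSum_le_extendRight q y _ hvb
    _ ≤ sSup (pvarSums q a b y) := le_csSup hy ⟨_, rfl⟩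

theorem FinitePVar.mono {q a b u v : ℝ} {y : ℝ → E} (hy : FinitePVar q a b y) (hau : a ≤ u)
    (hvb : v ≤ b) : FinitePVar q u v y := by
  refine ⟨sSup (pvarSums q a b y), ?_⟩
  rintro _ ⟨Q, rfl⟩
  exact pvarSum_le_sSup hy hau hvb Q

theorem pVar_nonneg (q a b : ℝ) (y : ℝ → E) : 0 ≤ pVar q a b y := by
  refine Real.rpow_nonneg (Real.sSup_nonneg ?_) _
  rintro _ ⟨P, rfl⟩
  exact pvarSum_nonneg q y P

theorem rpow_pvarSum_le_pVar {q a b u v : ℝ} {y : ℝ → E} (hy : FinitePVar q a b y)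
    (hq : 0 < q) (hau : a ≤ u) (hvb : v ≤ b) (Q : PathPartition u v) :
    pvarSum q y Q ^ (1 / q) ≤ pVar q a b y :=
  Real.rpow_le_rpow (pvarSum_nonneg q y Q) (pvarSum_le_sSup hy hau hvb Q) (by positivity)

theorem norm_sub_le_pVar {q a b u v : ℝ} {y : ℝ → E} (hy : FinitePVar q a b y) (hq : 0 < q)
    (hau : a ≤ u) (huv : u ≤ v) (hvb : v ≤ b) : ‖y v - y u‖ ≤ pVar q a b y := by
  have h := rpow_pvarSum_le_pVar hy hq hau hvb (PathPartition.single huv)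
  have hsingle : pvarSum q y (PathPartition.single huv) = ‖y v - y u‖ ^ q := by
    simp [pvarSum, PathPartition.single]
  rwa [hsingle, ← Real.rpow_mul (norm_nonneg _), mul_one_div_cancel hq.ne', Real.rpow_one] at h

theorem FinitePVar.bddAbove_norm {q a b : ℝ} {y : ℝ → E} (hy : FinitePVar q a b y)
    (hq : 0 < q) : BddAbove ((fun w => ‖y w‖) '' Icc a b) := by
  refine ⟨‖y a‖ + pVar q a b y, ?_⟩
  rintro _ ⟨w, hw, rfl⟩
  calc ‖y w‖ ≤ ‖y a‖ + ‖y w - y a‖ := norm_le_insert' _ _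
    _ ≤ ‖y a‖ + pVar q a b y := by grw [norm_sub_le_pVar hy hq le_rfl hw.1 hw.2]

theorem IsHolderWith.mono {K α a b u v : ℝ} {x : ℝ → E} (hx : IsHolderWith K α a b x)
    (hau : a ≤ u) (hvb : v ≤ b) : IsHolderWith K α u v x :=
  fun s hs t ht => hx s ⟨hau.trans hs.1, hs.2.trans hvb⟩ t ⟨hau.trans ht.1, ht.2.trans hvb⟩

theorem IsHolderWith.pvarSum_le {K α a b : ℝ} {x : ℝ → E} (hx : IsHolderWith K α a b x)
    (hK : 0 ≤ K) (hα : 0 < α) (P : PathPartition a b) :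
    pvarSum (1 / α) x P ≤ (K * (b - a) ^ α) ^ (1 / α) := by
  have holder_pow : ∀ {h : ℝ}, 0 ≤ h → (K * h ^ α) ^ (1 / α) = K ^ (1 / α) * h := fun hh => by
    rw [Real.mul_rpow hK (by positivity), one_div, Real.rpow_rpow_inv hh hα.ne']
  have hstep : ∀ i ∈ Finset.range P.n,
      ‖x (P.t (i + 1)) - x (P.t i)‖ ^ (1 / α) ≤ K ^ (1 / α) * (P.t (i + 1) - P.t i) := by
    intro i hi
    have hi := Finset.mem_range.1 hi
    have hinc : 0 ≤ P.t (i + 1) - P.t i := sub_nonneg.2 (P.mono i hi)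
    rw [← holder_pow hinc]
    gcongr
    simpa [abs_of_nonneg hinc] using hx _ (P.t_mem hi.le) _ (P.t_mem hi)
  calc pvarSum (1 / α) x P
      ≤ ∑ i ∈ Finset.range P.n, K ^ (1 / α) * (P.t (i + 1) - P.t i) := Finset.sum_le_sum hstep
    _ = (K * (b - a) ^ α) ^ (1 / α) := by
      rw [← Finset.mul_sum, Finset.sum_range_sub P.t, P.last, P.first,
        holder_pow (sub_nonneg.2 P.left_le_right)]

theorem pvarSum_le_of_interpolation {q ε D V a b : ℝ} {z : ℝ → E} (P : PathPartition a b)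
    (hq : 0 < q) (hε0 : 0 ≤ ε) (hε1 : ε < 1)
    (hD : ∀ i < P.n, ‖z (P.t (i + 1)) - z (P.t i)‖ ≤ D) (hV : pvarSum q z P ^ (1 / q) ≤ V) :
    pvarSum (q / (1 - ε)) z P ≤ (D ^ ε * V ^ (1 - ε)) ^ (q / (1 - ε)) := by
  set r := q / (1 - ε)
  have h1ε : 0 < 1 - ε := sub_pos.2 hε1
  have h1εr : (1 - ε) * r = q := mul_div_cancel₀ q h1ε.ne'
  have hεr : ε * r = r - q := by linarith
  have hqr : q ≤ r := by linarith [mul_nonneg hε0 (div_pos hq h1ε).le]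
  have hD0 : 0 ≤ D := (norm_nonneg _).trans (hD 0 P.npos)
  have hV0 : 0 ≤ V := (Real.rpow_nonneg (pvarSum_nonneg q z P) _).trans hV
  have hVq : pvarSum q z P ≤ V ^ q := by
    rwa [one_div, Real.rpow_inv_le_iff_of_pos (pvarSum_nonneg q z P) hV0 hq] at hV
  calc pvarSum r z P
      ≤ ∑ i ∈ Finset.range P.n, D ^ (r - q) * ‖z (P.t (i + 1)) - z (P.t i)‖ ^ q := by
        refine Finset.sum_le_sum fun i hi => ?_
        rw [← sub_add_cancel r q, Real.rpow_add' (norm_nonneg _) (by linarith), sub_add_cancel]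
        exact mul_le_mul_of_nonneg_right
          (Real.rpow_le_rpow (norm_nonneg _) (hD i (Finset.mem_range.1 hi)) (by linarith))
          (by positivity)
    _ ≤ D ^ (r - q) * V ^ q := by
        rw [← Finset.mul_sum]
        exact mul_le_mul_of_nonneg_left hVq (by positivity)
    _ = (D ^ ε * V ^ (1 - ε)) ^ r := by
        rw [Real.mul_rpow (by positivity) (by positivity), ← Real.rpow_mul hD0,
          ← Real.rpow_mul hV0, hεr, h1εr]

theorem pvarSum_sub_rpow_le {q a b : ℝ} (hq : 1 ≤ q) (y y' : ℝ → E) (P : PathPartition a b) :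
    pvarSum q (fun w => y w - y' w) P ^ (1 / q)
      ≤ pvarSum q y P ^ (1 / q) + pvarSum q y' P ^ (1 / q) := by
  refine le_trans ?_ (Real.Lp_add_le_of_nonneg _ hq (fun _ _ => norm_nonneg _)
    (fun _ _ => norm_nonneg _))
  refine Real.rpow_le_rpow (pvarSum_nonneg q _ P) (Finset.sum_le_sum fun i _ => ?_)
    (by positivity)
  refine Real.rpow_le_rpow (norm_nonneg _) ?_ (by positivity)
  calc ‖y (P.t (i + 1)) - y' (P.t (i + 1)) - (y (P.t i) - y' (P.t i))‖
      = ‖(y (P.t (i + 1)) - y (P.t i)) - (y' (P.t (i + 1)) - y' (P.t i))‖ := by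
        congr 1; abel
    _ ≤ _ := norm_sub_le _ _

theorem rpow_pvarSum_sub_le_pVar_add {q a b u v : ℝ} {y y' : ℝ → E} (hy : FinitePVar q a b y)
    (hy' : FinitePVar q a b y') (hq : 1 ≤ q) (hau : a ≤ u) (hvb : v ≤ b) (Q : PathPartition u v) :
    pvarSum q (fun r => y r - y' r) Q ^ (1 / q) ≤ pVar q a b y + pVar q a b y' :=
  have hq0 : 0 < q := zero_lt_one.trans_le hq
  (pvarSum_sub_rpow_le hq y y' Q).trans
    (add_le_add (rpow_pvarSum_le_pVar hy hq0 hau hvb Q) (rpow_pvarSum_le_pVar hy' hq0 hau hvb Q))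

theorem FinitePVar.sub {q a b : ℝ} {y y' : ℝ → E} (hy : FinitePVar q a b y)
    (hy' : FinitePVar q a b y') (hq : 1 ≤ q) : FinitePVar q a b (fun r => y r - y' r) := by
  refine ⟨(pVar q a b y + pVar q a b y') ^ q, ?_⟩
  rintro _ ⟨P, rfl⟩
  rw [← Real.rpow_inv_le_iff_of_pos (pvarSum_nonneg q _ P)
    (add_nonneg (pVar_nonneg q a b y) (pVar_nonneg q a b y')) (by linarith), ← one_div]
  exact rpow_pvarSum_sub_le_pVar_add hy hy' hq le_rfl le_rfl P

theorem unifNorm_nonneg (a b : ℝ) (y : ℝ → E) : 0 ≤ unifNorm a b y :=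
  Real.sSup_nonneg (by rintro _ ⟨w, -, rfl⟩; exact norm_nonneg _)

theorem norm_le_unifNorm {a b : ℝ} {y : ℝ → E} (hy : BddAbove ((fun w => ‖y w‖) '' Icc a b))
    {w : ℝ} (hw : w ∈ Icc a b) : ‖y w‖ ≤ unifNorm a b y :=
  le_csSup hy ⟨w, hw, rfl⟩

theorem unifNorm_le {a b M : ℝ} {y : ℝ → E} (hab : a ≤ b) (hM : ∀ w ∈ Icc a b, ‖y w‖ ≤ M) :
    unifNorm a b y ≤ M :=
  csSup_le ⟨_, a, left_mem_Icc.2 hab, rfl⟩ (by rintro _ ⟨w, hw, rfl⟩; exact hM w hw)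

end Variation

section Young

variable {E F : Type*} [NormedAddCommGroup E] [NormedSpace ℝ E] [NormedAddCommGroup F]
  [NormedSpace ℝ F]

theorem youngSum_remove (z : ℝ → E →L[ℝ] F) (x : ℝ → E) {a b : ℝ} (P : PathPartition a b)
    (i : ℕ) (h : i + 2 ≤ P.n) :
    youngSum z x P = youngSum z x (P.remove i h)
      + (z (P.t (i + 1)) - z (P.t i)) (x (P.t (i + 2)) - x (P.t (i + 1))) := by
  obtain ⟨k, hk⟩ : ∃ k, P.n = i + 1 + 1 + k := ⟨P.n - (i + 2), by omega⟩
  have hk' : (P.remove i h).n = i + 1 + k := by simp only [PathPartition.remove]; omega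
  set f : ℕ → F := fun j => z (P.t j) (x (P.t (j + 1)) - x (P.t j))
  have hP : youngSum z x P
      = ∑ j ∈ Finset.range i, f j + f i + f (i + 1) + ∑ j ∈ Finset.range k, f (i + 2 + j) := by
    rw [youngSum, hk, Finset.sum_range_add, Finset.sum_range_succ, Finset.sum_range_succ]
  have hP' : youngSum z x (P.remove i h) = ∑ j ∈ Finset.range i, f j
      + z (P.t i) (x (P.t (i + 2)) - x (P.t i)) + ∑ j ∈ Finset.range k, f (i + 2 + j) := by
    rw [youngSum, hk', Finset.sum_range_add, Finset.sum_range_succ]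
    congr 2
    · refine Finset.sum_congr rfl fun j hj => ?_
      have hj := Finset.mem_range.1 hj
      simp [f, PathPartition.remove, hj.le, Nat.succ_le_of_lt hj]
    · simp [PathPartition.remove]
    · funext j
      simp [f, PathPartition.remove, show i + 1 + j + 1 = i + 2 + j by omega,
        show ¬ i + 1 + j ≤ i by omega, show ¬ i + 2 + j ≤ i by omega]
  rw [hP, hP']
  simp only [f, sub_apply, map_sub]
  abel

theorem sum_norm_increment_apply_rpow_le {r p s a b : ℝ} (hrps : r.HolderTriple p s)
    (z : ℝ → E →L[ℝ] F) (x : ℝ → E) (P : PathPartition a b) :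
    ∑ j ∈ Finset.range (P.n - 1),
        ‖(z (P.t (j + 1)) - z (P.t j)) (x (P.t (j + 2)) - x (P.t (j + 1)))‖ ^ s
      ≤ pvarSum r z P ^ (s / r) * pvarSum p x P ^ (s / p) := by
  set dz : ℕ → ℝ := fun j => ‖z (P.t (j + 1)) - z (P.t j)‖
  set dx : ℕ → ℝ := fun j => ‖x (P.t (j + 2)) - x (P.t (j + 1))‖
  have hs := hrps.pos'
  have hr := hrps.left_pos
  have hp := hrps.right_pos
  have hzP : ∑ j ∈ Finset.range (P.n - 1), |dz j| ^ r ≤ pvarSum r z P := by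
    simp only [dz, abs_norm]
    exact Finset.sum_le_sum_of_subset_of_nonneg (Finset.range_subset_range.2 (Nat.sub_le _ _))
      fun _ _ _ => by positivity
  have hxP : ∑ j ∈ Finset.range (P.n - 1), |dx j| ^ p ≤ pvarSum p x P := by
    obtain ⟨m, hm⟩ : ∃ m, P.n = m + 1 := ⟨P.n - 1, by have := P.npos; omega⟩
    rw [pvarSum, hm, Finset.sum_range_succ', Nat.add_sub_cancel]
    simp only [dx, abs_norm]
    exact le_add_of_nonneg_right (by positivity)
  calc _ ≤ ∑ j ∈ Finset.range (P.n - 1), |dz j * dx j| ^ s := by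
        refine Finset.sum_le_sum fun j _ => ?_
        rw [abs_of_nonneg (by positivity)]
        exact Real.rpow_le_rpow (norm_nonneg _) (ContinuousLinearMap.le_opNorm _ _) hs.le
    _ ≤ (∑ j ∈ Finset.range (P.n - 1), |dz j| ^ r) ^ (s / r)
          * (∑ j ∈ Finset.range (P.n - 1), |dx j| ^ p) ^ (s / p) :=
        Real.Lr_rpow_le_Lp_mul_Lq _ _ _ hrps
    _ ≤ _ := by
        gcongr
        exact Real.rpow_nonneg (pvarSum_nonneg _ _ _) _

theorem exists_remove_norm_le {r p θ ω κ u v : ℝ} (hrpθ : r.HolderTriple p θ⁻¹) (hθ : 0 < θ)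
    (hω : 0 ≤ ω) (hκ : 0 ≤ κ) (z : ℝ → E →L[ℝ] F) (x : ℝ → E) (P : PathPartition u v)
    (hz : pvarSum r z P ≤ ω ^ r) (hx : pvarSum p x P ≤ κ ^ p) {m : ℕ} (hm : P.n = m + 2) :
    ∃ i < m + 1, ‖(z (P.t (i + 1)) - z (P.t i)) (x (P.t (i + 2)) - x (P.t (i + 1)))‖
      ≤ ((m : ℝ) + 1) ^ (-θ) * (ω * κ) := by
  set c : ℕ → ℝ := fun j => ‖(z (P.t (j + 1)) - z (P.t j)) (x (P.t (j + 2)) - x (P.t (j + 1)))‖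
  have hr := hrpθ.left_pos
  have hp := hrpθ.right_pos
  have hm1 : (0 : ℝ) < m + 1 := by positivity
  have hsum : ∑ j ∈ Finset.range (m + 1), c j ^ θ⁻¹
      ≤ ∑ _j ∈ Finset.range (m + 1), (ω * κ) ^ θ⁻¹ / (m + 1) := calc
    _ ≤ pvarSum r z P ^ (θ⁻¹ / r) * pvarSum p x P ^ (θ⁻¹ / p) := by
        simpa only [show P.n - 1 = m + 1 by omega]
          using sum_norm_increment_apply_rpow_le hrpθ z x P
    _ ≤ (ω ^ r) ^ (θ⁻¹ / r) * (κ ^ p) ^ (θ⁻¹ / p) := by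
        gcongr <;> first
          | exact pvarSum_nonneg _ _ _
          | exact Real.rpow_nonneg (pvarSum_nonneg _ _ _) _
    _ = _ := by
        rw [← Real.rpow_mul hω, ← Real.rpow_mul hκ, mul_div_cancel₀ _ hr.ne',
          mul_div_cancel₀ _ hp.ne', ← Real.mul_rpow hω hκ, Finset.sum_const, Finset.card_range,
          nsmul_eq_mul]
        push_cast
        field_simp
  obtain ⟨i, hi, hci⟩ := Finset.exists_le_of_sum_le Finset.nonempty_range_add_one hsum
  refine ⟨i, Finset.mem_range.1 hi, ?_⟩
  calc c i = (c i ^ θ⁻¹) ^ θ := (Real.rpow_inv_rpow (norm_nonneg _) hθ.ne').symm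
    _ ≤ ((ω * κ) ^ θ⁻¹ / (m + 1)) ^ θ := by gcongr
    _ = _ := by
        rw [Real.div_rpow (by positivity) hm1.le, Real.rpow_inv_rpow (by positivity) hθ.ne',
          Real.rpow_neg hm1.le]
        ring

theorem norm_youngSum_sub_le {r p θ ω κ u v : ℝ} (hrpθ : r.HolderTriple p θ⁻¹) (hθ : 1 < θ)
    (hω : 0 ≤ ω) (hκ : 0 ≤ κ) (z : ℝ → E →L[ℝ] F) (x : ℝ → E)
    (hz : ∀ Q : PathPartition u v, pvarSum r z Q ≤ ω ^ r)
    (hx : ∀ Q : PathPartition u v, pvarSum p x Q ≤ κ ^ p) (P : PathPartition u v) :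
    ‖youngSum z x P - z u (x v - x u)‖ ≤ (∑' k : ℕ, ((k : ℝ) + 1) ^ (-θ)) * (ω * κ) := by
  have hθ0 : 0 < θ := zero_lt_one.trans hθ
  have removal : ∀ (m : ℕ) (P : PathPartition u v), P.n = m + 1 →
      ‖youngSum z x P - z u (x v - x u)‖
        ≤ (∑ k ∈ Finset.range m, ((k : ℝ) + 1) ^ (-θ)) * (ω * κ) := by
    intro m
    induction m with
    | zero =>
      intro P hP
      have h1 : P.t 1 = v := by simpa [hP] using P.last
      simp [youngSum, hP, P.first, h1]
    | succ m ih =>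
      intro P hP
      obtain ⟨i, hi, hci⟩ := exists_remove_norm_le hrpθ hθ0 hω hκ z x P (hz P) (hx P) hP
      have hrem : (P.remove i (by omega)).n = m + 1 := by
        simp only [PathPartition.remove]; omega
      rw [youngSum_remove z x P i (by omega), Finset.sum_range_succ, add_mul, add_sub_right_comm]
      exact (norm_add_le _ _).trans (add_le_add (ih _ hrem) hci)
  have hsum : Summable fun k : ℕ => ((k : ℝ) + 1) ^ (-θ) := by
    simpa using (summable_nat_add_iff 1).2 (Real.summable_nat_rpow.2 (by linarith : -θ < -1))
  obtain ⟨m, hm⟩ : ∃ m, P.n = m + 1 := ⟨P.n - 1, by have := P.npos; omega⟩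
  refine (removal m P hm).trans (mul_le_mul_of_nonneg_right ?_ (mul_nonneg hω hκ))
  exact hsum.sum_le_tsum _ fun k _ => by positivity

theorem youngSum_sub (y y' : ℝ → E →L[ℝ] F) (x : ℝ → E) {u v : ℝ} (P : PathPartition u v) :
    youngSum (fun w => y w - y' w) x P = youngSum y x P - youngSum y' x P := by
  simp only [youngSum, sub_apply, Finset.sum_sub_distrib]

theorem IsYoungIntegral.sub {y y' : ℝ → E →L[ℝ] F} {x : ℝ → E} {u v : ℝ} {I I' : F}
    (hI : IsYoungIntegral y x u v I) (hI' : IsYoungIntegral y' x u v I') :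
    IsYoungIntegral (fun w => y w - y' w) x u v (I - I') := by
  intro η hη
  obtain ⟨δ, hδ, H⟩ := hI (η / 2) (half_pos hη)
  obtain ⟨δ', hδ', H'⟩ := hI' (η / 2) (half_pos hη)
  refine ⟨min δ δ', lt_min hδ hδ', fun P hP => ?_⟩
  rw [youngSum_sub, sub_sub_sub_comm]
  calc _ ≤ ‖youngSum y x P - I‖ + ‖youngSum y' x P - I'‖ := norm_sub_le _ _
    _ < η / 2 + η / 2 := add_lt_add (H P fun i hi => (hP i hi).trans_le (min_le_left _ _))
        (H' P fun i hi => (hP i hi).trans_le (min_le_right _ _))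
    _ = η := add_halves η

theorem IsYoungIntegral.norm_le {y : ℝ → E →L[ℝ] F} {x : ℝ → E} {u v B : ℝ} {I : F}
    (hI : IsYoungIntegral y x u v I) (huv : u ≤ v)
    (hB : ∀ P : PathPartition u v, ‖youngSum y x P‖ ≤ B) : ‖I‖ ≤ B := by
  refine le_of_forall_pos_le_add fun η hη => ?_
  obtain ⟨δ, hδ, H⟩ := hI η hη
  obtain ⟨P, hP⟩ := PathPartition.exists_fine huv hδ
  calc ‖I‖ ≤ ‖youngSum y x P‖ + ‖I - youngSum y x P‖ := norm_le_insert' _ _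
    _ ≤ B + η := add_le_add (hB P) (by rw [norm_sub_rev]; exact (H P hP).le)

theorem IsYoungIntegral.norm_le_of_pvarSum_le {r p θ ω κ u v : ℝ} {z : ℝ → E →L[ℝ] F}
    {x : ℝ → E} {I : F} (hI : IsYoungIntegral z x u v I) (huv : u ≤ v)
    (hrpθ : r.HolderTriple p θ⁻¹) (hθ : 1 < θ) (hω : 0 ≤ ω) (hκ : 0 ≤ κ)
    (hz : ∀ Q : PathPartition u v, pvarSum r z Q ≤ ω ^ r)
    (hx : ∀ Q : PathPartition u v, pvarSum p x Q ≤ κ ^ p) :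
    ‖I‖ ≤ ‖z u‖ * ‖x v - x u‖ + (∑' k : ℕ, ((k : ℝ) + 1) ^ (-θ)) * (ω * κ) :=
  hI.norm_le huv fun P => calc
    ‖youngSum z x P‖ ≤ ‖z u (x v - x u)‖ + ‖youngSum z x P - z u (x v - x u)‖ :=
      norm_le_insert' _ _
    _ ≤ _ := add_le_add ((z u).le_opNorm _) (norm_youngSum_sub_le hrpθ hθ hω hκ z x hz hx P)

theorem norm_sub_le_of_isYoungIntegral {α q ε K s t u v : ℝ} (hα : 0 < α) (hq : 1 ≤ q)
    (hε0 : 0 ≤ ε) (hε1 : ε < 1) (hθ : 1 < (1 - ε) / q + α) {x : ℝ → E}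
    {y y' : ℝ → E →L[ℝ] F} {I I' : F} (hy : FinitePVar q s t y) (hy' : FinitePVar q s t y')
    (hK : 0 ≤ K) (hx : IsHolderWith K α s t x) (hI : IsYoungIntegral y x u v I)
    (hI' : IsYoungIntegral y' x u v I') (hsu : s ≤ u) (huv : u ≤ v) (hvt : v ≤ t) :
    ‖I - I'‖ ≤ (1 + 2 * ∑' k : ℕ, ((k : ℝ) + 1) ^ (-((1 - ε) / q + α)))
      * unifNorm s t (fun r => y r - y' r) ^ ε
      * ((pVar q s t y + unifNorm s t y) ^ (1 - ε) + (pVar q s t y' + unifNorm s t y') ^ (1 - ε))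
      * K * (v - u) ^ α := by
  set z : ℝ → E →L[ℝ] F := fun r => y r - y' r
  set ζ := ∑' k : ℕ, ((k : ℝ) + 1) ^ (-((1 - ε) / q + α))
  set Z := unifNorm s t z
  set V := pVar q s t y + pVar q s t y'
  set Y := pVar q s t y + unifNorm s t y
  set Y' := pVar q s t y' + unifNorm s t y'
  set κ := K * (v - u) ^ α
  have hq0 : 0 < q := by linarith
  have hζ : 0 ≤ ζ := tsum_nonneg fun k => by positivity
  have hY := add_nonneg (pVar_nonneg q s t y) (unifNorm_nonneg s t y)
  have hY' := add_nonneg (pVar_nonneg q s t y') (unifNorm_nonneg s t y')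
  have hV : 0 ≤ V := add_nonneg (pVar_nonneg q s t y) (pVar_nonneg q s t y')
  have hZ : 0 ≤ Z := unifNorm_nonneg s t z
  have hκ : 0 ≤ κ := mul_nonneg hK (Real.rpow_nonneg (sub_nonneg.2 huv) α)
  have hmem : ∀ {w}, w ∈ Icc u v → w ∈ Icc s t := fun hw => ⟨hsu.trans hw.1, hw.2.trans hvt⟩
  have hz := hy.sub hy' hq
  have hz_le_Z : ∀ w ∈ Icc s t, ‖z w‖ ≤ Z := fun w hw =>
    norm_le_unifNorm (hz.bddAbove_norm hq0) hw
  have hZW : Z ≤ Y + Y' := by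
    refine unifNorm_le ((hsu.trans huv).trans hvt) fun w hw => (norm_sub_le _ _).trans ?_
    linarith [norm_le_unifNorm (hy.bddAbove_norm hq0) hw, pVar_nonneg q s t y,
      norm_le_unifNorm (hy'.bddAbove_norm hq0) hw, pVar_nonneg q s t y']
  have hVW : V ≤ Y + Y' := by linarith [unifNorm_nonneg s t y, unifNorm_nonneg s t y']
  have hz_var : ∀ Q : PathPartition u v,
      pvarSum (q / (1 - ε)) z Q ≤ ((2 * Z) ^ ε * V ^ (1 - ε)) ^ (q / (1 - ε)) := by
    intro Q
    refine pvarSum_le_of_interpolation Q hq0 hε0 hε1 (fun i hi => ?_) ?_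
    · refine (norm_sub_le _ _).trans ?_
      linarith [hz_le_Z _ (hmem (Q.t_mem hi)), hz_le_Z _ (hmem (Q.t_mem hi.le))]
    · exact rpow_pvarSum_sub_le_pVar_add hy hy' hq hsu hvt Q
  have htriple : (q / (1 - ε)).HolderTriple (1 / α) ((1 - ε) / q + α)⁻¹ :=
    ⟨by simp [inv_div], div_pos hq0 (sub_pos.2 hε1), by positivity⟩
  have hyoung := (hI.sub hI').norm_le_of_pvarSum_le huv htriple hθ (by positivity) hκ hz_var
    ((hx.mono hsu hvt).pvarSum_le hK hα)
  have hx_uv : ‖x v - x u‖ ≤ κ := by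
    simpa [abs_of_nonneg (sub_nonneg.2 huv)] using hx u (hmem ⟨le_rfl, huv⟩) v (hmem ⟨huv, le_rfl⟩)
  have hZV : (2 * Z) ^ ε * V ^ (1 - ε) ≤ 2 * (Z ^ ε * (Y + Y') ^ (1 - ε)) := by
    rw [Real.mul_rpow zero_le_two hZ, mul_assoc]
    gcongr
    exact Real.rpow_le_self_of_one_le one_le_two (by linarith)
  calc ‖I - I'‖ ≤ ‖z u‖ * ‖x v - x u‖ + ζ * ((2 * Z) ^ ε * V ^ (1 - ε) * κ) := hyoung
    _ ≤ Z ^ ε * (Y + Y') ^ (1 - ε) * κ + ζ * (2 * (Z ^ ε * (Y + Y') ^ (1 - ε)) * κ) := by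
      gcongr
      exact (hz_le_Z u (hmem ⟨le_rfl, huv⟩)).trans
        (le_rpow_mul_rpow_of_le hZ hZW hε1.le)
    _ = (1 + 2 * ζ) * Z ^ ε * (Y + Y') ^ (1 - ε) * κ := by ring
    _ ≤ (1 + 2 * ζ) * Z ^ ε * (Y ^ (1 - ε) + Y' ^ (1 - ε)) * κ := by
      gcongr
      exact Real.rpow_add_le_add_rpow hY hY' (by linarith) (by linarith)
    _ = _ := by simp only [κ]; ring

end Young

/-- **Continuity estimate for the Young integral (Corollary A.2, second part).**
If `(1-ε)/q + α > 1`, `x ∈ C^α([a,b])` and `y, y'` have finite `q`-variation, then the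
Young integrals satisfy, on every `[s,t] ⊆ [a,b]`,
`‖∫_0^· y dx - ∫_0^· y' dx‖_{α,[s,t]} ≤ C ‖y-y'‖_{∞,[s,t]}^ε
  (‖y‖_{q-var,∞,[s,t]}^{1-ε} + ‖y'‖_{q-var,∞,[s,t]}^{1-ε}) ‖x‖_{α,[s,t]}`
for a constant `C` depending only on `α`, `q` and `ε`. -/
theorem young_integral_continuity_bound
    (α q ε : ℝ) (hα : 0 < α ∧ α ≤ 1) (hq : 1 ≤ q) (hε : 0 < ε)
    (hαqε : 1 < (1 - ε) / q + α) :
    ∃ C : ℝ, 0 < C ∧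
      ∀ (d ℓ : ℕ) (a b : ℝ), a ≤ b →
      ∀ (x : ℝ → Euc ℓ) (Kx : ℝ), 0 ≤ Kx → IsHolderWith Kx α a b x →
      ∀ y y' : ℝ → Euc ℓ →L[ℝ] Euc d, FinitePVar q a b y → FinitePVar q a b y' →
      ∀ I I' : ℝ → ℝ → Euc d,
        (∀ u v : ℝ, a ≤ u → u ≤ v → v ≤ b → IsYoungIntegral y x u v (I u v)) →
        (∀ u v : ℝ, a ≤ u → u ≤ v → v ≤ b → IsYoungIntegral y' x u v (I' u v)) →
        ∀ s t : ℝ, a ≤ s → s ≤ t → t ≤ b →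
        ∀ Kst : ℝ, 0 ≤ Kst → IsHolderWith Kst α s t x →
        ∀ u v : ℝ, s ≤ u → u ≤ v → v ≤ t →
          ‖I u v - I' u v‖
            ≤ C * unifNorm s t (fun r => y r - y' r) ^ ε
              * ((pVar q s t y + unifNorm s t y) ^ (1 - ε)
                  + (pVar q s t y' + unifNorm s t y') ^ (1 - ε))
              * Kst * (v - u) ^ α := by
  obtain ⟨hα0, hα1⟩ := hα
  have hε1 : ε < 1 := by
    by_contra! h
    linarith [div_nonpos_of_nonpos_of_nonneg (by linarith : 1 - ε ≤ 0) (by linarith : 0 ≤ q)]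
  refine ⟨1 + 2 * ∑' k : ℕ, ((k : ℝ) + 1) ^ (-((1 - ε) / q + α)),
    by positivity, ?_⟩
  intro d ℓ a b _ x Kx _ _ y y' hy hy' I I' hI hI' s t has _ htb Kst hKst hx u v hsu huv hvt
  exact norm_sub_le_of_isYoungIntegral hα0 hq hε.le hε1 hαqε (hy.mono has htb)
    (hy'.mono has htb) hKst hx (hI u v (has.trans hsu) huv (hvt.trans htb))
    (hI' u v (has.trans hsu) huv (hvt.trans htb)) hsu huv hvt
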